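/- Let ℓ_a, ℓ_b > 0 and real-valued f_a ∈ L²(0,ℓ_a), f_b ∈ L²(0,ℓ_b) be given. For λ ∈ ℝ let I(E,λ) denote the Fricke–Vogt invariant along the curve of initial conditions for the scaled potential pieces λf_a, λf_b (assumed well defined for all E ∈ ℝ and λ ∈ ℝ). Then I(E,λ) tends to zero uniformly in E > 0 as λ → 0: for every ε > 0 there exists λ₀ > 0 such that |I(E,λ)| < ε for every E > 0 and every λ with 0 < |λ| < λ₀. -/

import Mathlib

/-!
For `E = k² > 0` the solutions with zero potential are `cos (k x)` and `sin (k x) / k`. If `y`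
solves `-y'' + q y = E y` and `u` is the free solution with the same initial data, then
`w = y - u` satisfies the energy identity `E w² + w'² = ∫ 2 q y w'`, in which `E` no longer
appears. Since `|w| ≤ ℓ · max |w'|`, this gives `max |w'| ≤ 4 C ∫ |q|` (with `|u| ≤ C`) as soon
as `4 ℓ ∫ |q| ≤ 1`, uniformly in `E`. Hence each half-trace `x_{λf}(E)` lies within `O(|λ|)` of
`cos (√E ℓ)`, uniformly in `E > 0`; as `I (cos (a + b), cos a, cos b) = 0` and `I` is Lipschitz
on bounded sets, `I(E, λ) = O(|λ|)`.
-/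

open MeasureTheory Set Filter
open scoped ENNReal

noncomputable section

/-- `IsSolution ℓ E f y y'` : `y` is a solution of `-y'' + f·y = E·y` on `[0,ℓ]`:
`y` is differentiable with continuous derivative `y'` on `[0,ℓ]`, and `y'` is absolutely
continuous with a.e. derivative `(f - E)·y` (encoded in integrated form). -/
def IsSolution (ℓ E : ℝ) (f y y' : ℝ → ℝ) : Prop :=
  (∀ x ∈ Icc (0:ℝ) ℓ, HasDerivAt y (y' x) x) ∧
  ContinuousOn y' (Icc (0:ℝ) ℓ) ∧
  (∀ x ∈ Icc (0:ℝ) ℓ, y' x = y' 0 + ∫ t in (0:ℝ)..x, (f t - E) * y t)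

/-- Neumann solution: `y(0) = 1`, `y'(0) = 0`. -/
def IsNeumannSolution (ℓ E : ℝ) (f y y' : ℝ → ℝ) : Prop :=
  IsSolution ℓ E f y y' ∧ y 0 = 1 ∧ y' 0 = 0

/-- Dirichlet solution: `y(0) = 0`, `y'(0) = 1`. -/
def IsDirichletSolution (ℓ E : ℝ) (f y y' : ℝ → ℝ) : Prop :=
  IsSolution ℓ E f y y' ∧ y 0 = 0 ∧ y' 0 = 1

/-- `v` is the half-trace `x_f(E) = (ψ_N(ℓ,E) + ψ_D'(ℓ,E))/2`. -/
def IsHalfTrace (ℓ : ℝ) (f : ℝ → ℝ) (E v : ℝ) : Prop :=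
  ∃ yN yN' yD yD' : ℝ → ℝ,
    IsNeumannSolution ℓ E f yN yN' ∧ IsDirichletSolution ℓ E f yD yD' ∧
    v = (yN ℓ + yD' ℓ) / 2

/-- The Fricke–Vogt invariant. -/
def FV (x y z : ℝ) : ℝ := x ^ 2 + y ^ 2 + z ^ 2 - 2 * x * y * z - 1

/-- The Fibonacci trace map `T(x,y,z) = (2xy - z, x, y)`. -/
def traceMap : ℝ × ℝ × ℝ → ℝ × ℝ × ℝ :=
  fun p => (2 * p.1 * p.2.1 - p.2.2, p.1, p.2.1)

/-- The set `B` of energies whose forward orbit under the trace map, starting from the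
curve of initial conditions `γ`, is bounded. -/
def traceSpectrum (γ : ℝ → ℝ × ℝ × ℝ) : Set ℝ :=
  {E | Bornology.IsBounded (Set.range fun n : ℕ => traceMap^[n] (γ E))}

/-- Local Hausdorff dimension of `F` at `E`:
`lim_{ε ↓ 0} dim_H (F ∩ (E-ε, E+ε))`, which equals the infimum by monotonicity. -/
def locDim (F : Set ℝ) (E : ℝ) : ℝ≥0∞ :=
  ⨅ (ε : ℝ) (_ : 0 < ε), dimH (F ∩ Ioo (E - ε) (E + ε))

/-- Concatenation `f_ab = (f_a | f_b)` (on `[0, ℓa + ℓb)`). -/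
def concatPair (ℓa : ℝ) (fa fb : ℝ → ℝ) : ℝ → ℝ :=
  fun x => if x < ℓa then fa x else fb (x - ℓa)

/-- Fibonacci substitution `S(a) = ab`, `S(b) = a`, with `a = true`, `b = false`. -/
def fibSub : List Bool → List Bool :=
  fun w => w.flatMap fun c => if c then [true, false] else [true]

/-- The Fibonacci word `u`, the fixed point of the substitution starting with `a`:
its `n`-th letter is the `n`-th letter of `Sᵏ(a)` for any large `k` (here `k = n+2`). -/
def fibWord (n : ℕ) : Bool := (fibSub^[n + 2] [true]).getD n true

/-- `V` is the potential on `[0,∞)` obtained by concatenating `f_{u_0} | f_{u_1} | ⋯`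
along the Fibonacci word `u`. -/
def IsFibPotential (ℓa ℓb : ℝ) (fa fb V : ℝ → ℝ) : Prop :=
  ∀ n : ℕ, ∀ x : ℝ,
    (∑ j ∈ Finset.range n, (if fibWord j then ℓa else ℓb)) ≤ x →
    x < (∑ j ∈ Finset.range (n + 1), (if fibWord j then ℓa else ℓb)) →
    V x = (if fibWord n then fa else fb) (x - ∑ j ∈ Finset.range n, (if fibWord j then ℓa else ℓb))

/-- `(f_a, f_b)` is aperiodic: the concatenated Fibonacci potential `V` has no period `p > 0`. -/
def FibAperiodic (ℓa ℓb : ℝ) (fa fb : ℝ → ℝ) : Prop :=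
  ∀ V : ℝ → ℝ, IsFibPotential ℓa ℓb fa fb V → ¬ ∃ p > 0, ∀ x ≥ 0, V (x + p) = V x

end

theorem sq_add_intervalIntegral {g : ℝ → ℝ} {a b : ℝ} (hg : IntervalIntegrable g volume a b)
    (c : ℝ) :
    (c + ∫ t in a..b, g t) ^ 2 = c ^ 2 + ∫ t in a..b, 2 * (c + ∫ s in a..t, g s) * g t := by
  set G : ℝ → ℝ := fun x => c + ∫ s in a..x, g s
  have hG : AbsolutelyContinuousOnInterval G a b :=
    ((LipschitzWith.const c).lipschitzOnWith.absolutelyContinuousOnInterval).add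
      (hg.absolutelyContinuousOnInterval_intervalIntegral left_mem_uIcc)
  have hderiv : ∀ᵐ x, x ∈ uIoc a b → deriv G x = g x := by
    filter_upwards [hg.ae_hasDerivAt_integral] with x hx hxab
    exact ((hx (uIoc_subset_uIcc hxab) a left_mem_uIcc).const_add c).deriv
  have h := hG.integral_deriv_mul_eq_sub hG
  rw [intervalIntegral.integral_congr_ae (g := fun t => 2 * G t * g t) ?_] at h
  · simp only [G, intervalIntegral.integral_same, add_zero] at h
    linear_combination -h
  · filter_upwards [hderiv] with x hx hxab
    rw [hx hxab]
    ring

theorem mul_sq_add_sq_eq_integral {ℓ E x : ℝ} {w w' h : ℝ → ℝ}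
    (hw : ∀ t ∈ Icc 0 ℓ, HasDerivAt w (w' t) t) (hw' : ContinuousOn w' (Icc 0 ℓ))
    (hh : IntervalIntegrable h volume 0 ℓ)
    (hint : ∀ t ∈ Icc 0 ℓ, w' t = w' 0 + ∫ s in 0..t, h s) (hx : x ∈ Icc 0 ℓ) :
    E * w x ^ 2 + w' x ^ 2
      = E * w 0 ^ 2 + w' 0 ^ 2 + ∫ t in 0..x, 2 * w' t * (E * w t + h t) := by
  have hsub : uIcc 0 x ⊆ Icc 0 ℓ := by
    rw [uIcc_of_le hx.1]
    exact Icc_subset_Icc_right hx.2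
  have hwc : ContinuousOn w (uIcc 0 x) :=
    fun t ht => (hw t (hsub ht)).continuousAt.continuousWithinAt
  have hww' : IntervalIntegrable (fun t => 2 * w t * w' t) volume 0 x :=
    ((continuousOn_const.mul hwc).mul (hw'.mono hsub)).intervalIntegrable
  have hw'h : IntervalIntegrable (fun t => 2 * w' t * h t) volume 0 x :=
    (hh.mono_set (by rwa [uIcc_of_le (hx.1.trans hx.2)])).continuousOn_mul
      (continuousOn_const.mul (hw'.mono hsub))
  have hsq : w x ^ 2 = w 0 ^ 2 + ∫ t in 0..x, 2 * w t * w' t := by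
    rw [intervalIntegral.integral_eq_sub_of_hasDerivAt (f := fun t => w t ^ 2) (fun t ht => ?_)
      hww']
    · ring
    · simpa [mul_comm, mul_assoc, mul_left_comm] using (hw t (hsub ht)).fun_pow 2
  have hsq' : w' x ^ 2 = w' 0 ^ 2 + ∫ t in 0..x, 2 * w' t * h t := by
    rw [hint x hx, sq_add_intervalIntegral (hh.mono_set ?_)]
    · congr 1
      refine intervalIntegral.integral_congr fun t ht => ?_
      rw [hint t (hsub ht)]
    · rwa [uIcc_of_le (hx.1.trans hx.2)]
  have hsplit : ∫ t in 0..x, 2 * w' t * (E * w t + h t)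
      = E * (∫ t in 0..x, 2 * w t * w' t) + ∫ t in 0..x, 2 * w' t * h t := by
    rw [← intervalIntegral.integral_const_mul, ← intervalIntegral.integral_add
      (hww'.const_mul E) hw'h]
    exact intervalIntegral.integral_congr fun t _ => by ring
  linear_combination E * hsq + hsq' - hsplit

theorem IsSolution.continuousOn {ℓ E : ℝ} {f y y' : ℝ → ℝ} (hy : IsSolution ℓ E f y y') :
    ContinuousOn y (Icc 0 ℓ) :=
  fun t ht => (hy.1 t ht).continuousAt.continuousWithinAt

theorem IsSolution.energy_sub_eq {ℓ E x : ℝ} {q y y' u u' : ℝ → ℝ}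
    (hy : IsSolution ℓ E q y y') (hu : IsSolution ℓ E 0 u u') (h0 : y 0 = u 0)
    (h0' : y' 0 = u' 0) (hq : IntervalIntegrable q volume 0 ℓ) (hx : x ∈ Icc 0 ℓ) :
    E * (y x - u x) ^ 2 + (y' x - u' x) ^ 2 = ∫ t in 0..x, 2 * (y' t - u' t) * (q t * y t) := by
  have hℓ : uIcc 0 ℓ = Icc 0 ℓ := uIcc_of_le (hx.1.trans hx.2)
  have hyi : IntervalIntegrable (fun t => (q t - E) * y t) volume 0 ℓ :=
    (hq.sub intervalIntegrable_const).mul_continuousOn (hℓ ▸ hy.continuousOn)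
  have hui : IntervalIntegrable (fun t => (0 - E) * u t) volume 0 ℓ :=
    (hℓ ▸ hu.continuousOn.const_smul (0 - E)).intervalIntegrable
  have hint : ∀ t ∈ Icc 0 ℓ, y' t - u' t
      = (y' 0 - u' 0) + ∫ s in 0..t, ((q s - E) * y s - (0 - E) * u s) := by
    intro t ht
    have hsub : uIcc 0 t ⊆ uIcc 0 ℓ := by
      rw [hℓ, uIcc_of_le ht.1]
      exact Icc_subset_Icc_right ht.2
    rw [intervalIntegral.integral_sub (hyi.mono_set hsub) (hui.mono_set hsub), hy.2.2 t ht,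
      hu.2.2 t ht]
    simp only [Pi.zero_apply]
    ring
  rw [mul_sq_add_sq_eq_integral (w := fun t => y t - u t) (fun t ht => (hy.1 t ht).sub (hu.1 t ht))
    (hy.2.1.sub hu.2.1) (hyi.sub hui) hint hx, h0, h0', sub_self, sub_self,
    zero_pow two_ne_zero, mul_zero, zero_add, zero_add]
  exact intervalIntegral.integral_congr fun t _ => by ring

theorem intervalIntegral_le_mul_integral_abs {f q : ℝ → ℝ} {a b M : ℝ} (hab : a ≤ b)
    (hq : IntervalIntegrable q volume a b) (h : ∀ t ∈ Ioc a b, |f t| ≤ M * |q t|) :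
    ∫ t in a..b, f t ≤ M * ∫ t in a..b, |q t| := by
  rw [← intervalIntegral.integral_const_mul]
  exact (le_abs_self _).trans (intervalIntegral.norm_integral_le_of_norm_le (f := f) hab
    (Eventually.of_forall h) (hq.abs.const_mul M))

theorem IsSolution.abs_sub_le_of_free {ℓ E C : ℝ} {q y y' u u' : ℝ → ℝ}
    (hy : IsSolution ℓ E q y y') (hu : IsSolution ℓ E 0 u u') (h0 : y 0 = u 0)
    (h0' : y' 0 = u' 0) (hℓ : 0 ≤ ℓ) (hE : 0 ≤ E) (hq : IntervalIntegrable q volume 0 ℓ)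
    (hsmall : 4 * ℓ * ∫ t in 0..ℓ, |q t| ≤ 1) (hC : ∀ t ∈ Icc 0 ℓ, |u t| ≤ C) :
    |y' ℓ - u' ℓ| ≤ 4 * C * (∫ t in 0..ℓ, |q t|) ∧
      |y ℓ - u ℓ| ≤ 4 * C * (∫ t in 0..ℓ, |q t|) * ℓ := by
  set θ := ∫ t in 0..ℓ, |q t|
  have hℓmem : ℓ ∈ Icc 0 ℓ := right_mem_Icc.2 hℓ
  obtain ⟨z, hz, hmax⟩ := isCompact_Icc.exists_isMaxOn (nonempty_Icc.2 hℓ)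
    (hy.2.1.sub hu.2.1).abs
  set S := |y' z - u' z|
  have hS : ∀ t ∈ Icc 0 ℓ, |y' t - u' t| ≤ S := fun t ht => hmax ht
  have hdev : ∀ t ∈ Icc 0 ℓ, |y t - u t| ≤ S * t := by
    intro t ht
    have := norm_image_sub_le_of_norm_deriv_le_segment' (f := fun t => y t - u t)
      (fun t ht => ((hy.1 t ht).sub (hu.1 t ht)).hasDerivWithinAt)
      (fun t ht => hS t (Ico_subset_Icc_self ht)) t ht
    simpa [h0] using this
  have hybound : ∀ t ∈ Icc 0 ℓ, |y t| ≤ S * ℓ + C := by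
    intro t ht
    have : S * t ≤ S * ℓ := by gcongr; exact ht.2
    linarith [abs_sub_abs_le_abs_sub (y t) (u t), hdev t ht, hC t ht]
  have hθ : 0 ≤ θ := intervalIntegral.integral_nonneg hℓ fun t _ => abs_nonneg _
  have hC0 : 0 ≤ C := (abs_nonneg _).trans (hC 0 (left_mem_Icc.2 hℓ))
  have hSS : S ^ 2 ≤ 2 * S * (S * ℓ + C) * θ :=
    calc S ^ 2 ≤ E * (y z - u z) ^ 2 + (y' z - u' z) ^ 2 := by
          rw [sq_abs]; nlinarith [sq_nonneg (y z - u z)]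
      _ = ∫ t in 0..z, 2 * (y' t - u' t) * (q t * y t) :=
          hy.energy_sub_eq hu h0 h0' hq hz
      _ ≤ 2 * S * (S * ℓ + C) * ∫ t in 0..z, |q t| := by
          refine intervalIntegral_le_mul_integral_abs hz.1 (hq.mono_set ?_) fun t ht => ?_
          · rw [uIcc_of_le hz.1, uIcc_of_le hℓ]
            exact Icc_subset_Icc_right hz.2
          have ht' : t ∈ Icc 0 ℓ := ⟨ht.1.le, ht.2.trans hz.2⟩
          rw [abs_mul, abs_mul, abs_mul, abs_two]
          calc 2 * |y' t - u' t| * (|q t| * |y t|) = 2 * (|y' t - u' t| * |y t|) * |q t| := by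
                ring
            _ ≤ 2 * (S * (S * ℓ + C)) * |q t| := by gcongr; exacts [hS t ht', hybound t ht']
            _ = 2 * S * (S * ℓ + C) * |q t| := by ring
      _ ≤ 2 * S * (S * ℓ + C) * θ := by
          gcongr
          exact intervalIntegral.integral_mono_interval le_rfl hz.1 hz.2
            (Eventually.of_forall fun t => abs_nonneg _) hq.abs
  -- `4 ℓ θ ≤ 1` absorbs the quadratic term `2 ℓ θ S²` into the left-hand side.
  have hS4 : S ≤ 4 * C * θ := by
    by_contra! h
    have hS0 : 0 < S := (by positivity : 0 ≤ 4 * C * θ).trans_lt h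
    nlinarith [mul_le_mul_of_nonneg_right hsmall (sq_nonneg S), mul_pos hS0 (sub_pos.2 h)]
  exact ⟨(hS ℓ hℓmem).trans hS4, (hdev ℓ hℓmem).trans (by gcongr)⟩

theorem isSolution_zero_of_hasDerivAt {ℓ E : ℝ} {u u' : ℝ → ℝ}
    (hu : ∀ x, HasDerivAt u (u' x) x) (hu' : ∀ x, HasDerivAt u' (-E * u x) x) :
    IsSolution ℓ E 0 u u' := by
  refine ⟨fun x _ => hu x, fun x _ => (hu' x).continuousAt.continuousWithinAt, fun x _ => ?_⟩
  have hcont : Continuous u := continuous_iff_continuousAt.2 fun x => (hu x).continuousAt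
  have := intervalIntegral.integral_eq_sub_of_hasDerivAt (fun t _ => hu' t)
    ((continuous_const.mul hcont).intervalIntegrable 0 x)
  simp only [Pi.zero_apply, zero_sub]
  linarith

open Real in
theorem isSolution_cos (ℓ k : ℝ) :
    IsSolution ℓ (k ^ 2) 0 (fun x => cos (k * x)) (fun x => -(k * sin (k * x))) := by
  have hkx (x : ℝ) : HasDerivAt (fun x => k * x) k x := by
    simpa using (hasDerivAt_id x).const_mul k
  exact isSolution_zero_of_hasDerivAt (fun x => (hkx x).cos.congr_deriv (by ring))
    (fun x => ((hkx x).sin.const_mul k).neg.congr_deriv (by ring))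

open Real in
theorem isSolution_sin_div (ℓ : ℝ) {k : ℝ} (hk : k ≠ 0) :
    IsSolution ℓ (k ^ 2) 0 (fun x => sin (k * x) / k) (fun x => cos (k * x)) := by
  have hkx (x : ℝ) : HasDerivAt (fun x => k * x) k x := by
    simpa using (hasDerivAt_id x).const_mul k
  refine isSolution_zero_of_hasDerivAt (fun x => ((hkx x).sin.div_const k).congr_deriv ?_)
    (fun x => (hkx x).cos.congr_deriv ?_) <;> field_simp

theorem abs_sin_mul_div_le {k t : ℝ} (hk : 0 < k) (ht : 0 ≤ t) : |Real.sin (k * t) / k| ≤ t := by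
  rw [abs_div, abs_of_pos hk, div_le_iff₀ hk]
  exact Real.abs_sin_le_abs.trans_eq (by rw [abs_of_nonneg (by positivity)]; ring)

theorem IsHalfTrace.abs_sub_cos_le {ℓ E v : ℝ} {q : ℝ → ℝ} (h : IsHalfTrace ℓ q E v) (hℓ : 0 ≤ ℓ)
    (hE : 0 < E) (hq : IntervalIntegrable q volume 0 ℓ) (hsmall : 4 * ℓ * ∫ t in 0..ℓ, |q t| ≤ 1) :
    |v - Real.cos (√E * ℓ)| ≤ 4 * ℓ * ∫ t in 0..ℓ, |q t| := by
  obtain ⟨yN, yN', yD, yD', ⟨hN, hN0, hN0'⟩, ⟨hD, hD0, hD0'⟩, rfl⟩ := h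
  obtain ⟨k, hk, rfl⟩ : ∃ k > 0, E = k ^ 2 := ⟨√E, Real.sqrt_pos.2 hE, (Real.sq_sqrt hE.le).symm⟩
  rw [Real.sqrt_sq hk.le]
  have hNeumann := (hN.abs_sub_le_of_free (isSolution_cos ℓ k) (by simp [hN0]) (by simp [hN0'])
    hℓ (sq_nonneg k) hq hsmall fun t _ => Real.abs_cos_le_one (k * t)).2
  have hDirichlet := (hD.abs_sub_le_of_free (isSolution_sin_div ℓ hk.ne') (by simp [hD0])
    (by simp [hD0']) hℓ (sq_nonneg k) hq hsmall
    fun t ht => (abs_sin_mul_div_le hk ht.1).trans ht.2).1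
  rw [abs_le] at hNeumann hDirichlet ⊢
  constructor <;> linarith [hNeumann.1, hNeumann.2, hDirichlet.1, hDirichlet.2]

theorem IsHalfTrace.abs_sub_cos_le_of_smul {ℓ E v c K : ℝ} {f : ℝ → ℝ}
    (h : IsHalfTrace ℓ (fun t => c * f t) E v) (hℓ : 0 ≤ ℓ) (hE : 0 < E)
    (hf : IntervalIntegrable f volume 0 ℓ) (hK : 4 * ℓ * ∫ t in 0..ℓ, |f t| ≤ K)
    (hsmall : |c| * K ≤ 1) :
    |v - Real.cos (√E * ℓ)| ≤ |c| * K := by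
  have hscale : 4 * ℓ * ∫ t in 0..ℓ, |c * f t| = |c| * (4 * ℓ * ∫ t in 0..ℓ, |f t|) := by
    simp only [abs_mul, intervalIntegral.integral_const_mul]
    ring
  have hcK : |c| * (4 * ℓ * ∫ t in 0..ℓ, |f t|) ≤ |c| * K := by gcongr
  exact (hscale ▸ h.abs_sub_cos_le hℓ hE (hf.const_mul c) (hscale ▸ hcK.trans hsmall)).trans hcK

theorem FV_cos_add_cos_cos (a b : ℝ) : FV (Real.cos (a + b)) (Real.cos a) (Real.cos b) = 0 := by
  simp only [FV, Real.cos_add]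
  linear_combination Real.sin b ^ 2 * Real.sin_sq_add_cos_sq a +
    (1 - Real.cos a ^ 2) * Real.sin_sq_add_cos_sq b

theorem abs_add_sub_two_mul_mul_le {a b c d : ℝ} (ha : |a| ≤ 2) (hb : |b| ≤ 2) (hc : |c| ≤ 2)
    (hd : |d| ≤ 2) : |a + b - 2 * c * d| ≤ 12 := by
  have hcd : |2 * c * d| ≤ 8 := by
    rw [abs_mul, abs_mul, abs_two]
    nlinarith [abs_nonneg c, abs_nonneg d]
  linarith [abs_sub (a + b) (2 * c * d), abs_add_le a b]

theorem abs_FV_sub_FV_le {x y z x' y' z' : ℝ} (hx : |x| ≤ 2) (hy : |y| ≤ 2) (hz : |z| ≤ 2)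
    (hx' : |x'| ≤ 2) (hy' : |y'| ≤ 2) (hz' : |z'| ≤ 2) :
    |FV x y z - FV x' y' z'| ≤ 12 * (|x - x'| + |y - y'| + |z - z'|) := by
  have hsplit : FV x y z - FV x' y' z' = (x - x') * (x + x' - 2 * y * z)
      + (y - y') * (y + y' - 2 * x' * z) + (z - z') * (z + z' - 2 * x' * y') := by
    simp only [FV]
    ring
  have step {d e : ℝ} (he : |e| ≤ 12) : |d * e| ≤ 12 * |d| := by
    rw [abs_mul, mul_comm 12]
    exact mul_le_mul_of_nonneg_left he (abs_nonneg d)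
  rw [hsplit]
  linarith [abs_add_three ((x - x') * (x + x' - 2 * y * z)) ((y - y') * (y + y' - 2 * x' * z))
    ((z - z') * (z + z' - 2 * x' * y')),
    step (d := x - x') (abs_add_sub_two_mul_mul_le hx hx' hy hz),
    step (d := y - y') (abs_add_sub_two_mul_mul_le hy hy' hx' hz),
    step (d := z - z') (abs_add_sub_two_mul_mul_le hz hz' hx' hy')]

theorem abs_FV_le_of_near_cos {x y z a b δ : ℝ} (hδ : δ ≤ 1) (hx : |x - Real.cos (a + b)| ≤ δ)
    (hy : |y - Real.cos a| ≤ δ) (hz : |z - Real.cos b| ≤ δ) : |FV x y z| ≤ 36 * δ := by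
  have near {u c : ℝ} (hc : |c| ≤ 1) (hu : |u - c| ≤ δ) : |u| ≤ 2 := by
    linarith [abs_sub_abs_le_abs_sub u c]
  have hcos (t : ℝ) : |Real.cos t| ≤ 2 := (Real.abs_cos_le_one t).trans one_le_two
  have := abs_FV_sub_FV_le (near (Real.abs_cos_le_one _) hx) (near (Real.abs_cos_le_one _) hy)
    (near (Real.abs_cos_le_one _) hz) (hcos (a + b)) (hcos a) (hcos b)
  rw [FV_cos_add_cos_cos, sub_zero] at this
  linarith

theorem intervalIntegrable_concatPair {ℓa ℓb : ℝ} {fa fb : ℝ → ℝ} (ha : 0 ≤ ℓa) (hb : 0 ≤ ℓb)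
    (hfa : IntervalIntegrable fa volume 0 ℓa) (hfb : IntervalIntegrable fb volume 0 ℓb) :
    IntervalIntegrable (concatPair ℓa fa fb) volume 0 (ℓa + ℓb) := by
  refine IntervalIntegrable.trans (b := ℓa) ?_ ?_
  · rw [intervalIntegrable_iff_integrableOn_Ioo_of_le ha] at hfa ⊢
    exact hfa.congr_fun (fun x hx => (if_pos hx.2).symm) measurableSet_Ioo
  · have hshift := hfb.comp_sub_right ℓa
    rw [zero_add, add_comm] at hshift
    refine hshift.congr fun x hx => ?_
    rw [uIoc_of_le (le_add_of_nonneg_right hb)] at hx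
    exact (if_neg (not_lt.2 hx.1.le)).symm

/-- the Fricke–Vogt invariant `I(E,λ)` tends to zero uniformly in `E > 0`
as the coupling `λ → 0`. -/
theorem frickeVogt_uniform_small_coupling
    (ℓa ℓb : ℝ) (hℓa : 0 < ℓa) (hℓb : 0 < ℓb) (fa fb : ℝ → ℝ)
    (hfa : MeasureTheory.MemLp fa 2 (MeasureTheory.volume.restrict (Set.Ioc 0 ℓa)))
    (hfb : MeasureTheory.MemLp fb 2 (MeasureTheory.volume.restrict (Set.Ioc 0 ℓb)))
    (xa xb xab : ℝ → ℝ → ℝ)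
    (hxa : ∀ lam E : ℝ, IsHalfTrace ℓa (fun t => lam * fa t) E (xa lam E))
    (hxb : ∀ lam E : ℝ, IsHalfTrace ℓb (fun t => lam * fb t) E (xb lam E))
    (hxab : ∀ lam E : ℝ,
      IsHalfTrace (ℓa + ℓb) (fun t => lam * concatPair ℓa fa fb t) E (xab lam E)) :
    ∀ ε > (0:ℝ), ∃ lam₀ > (0:ℝ), ∀ lam : ℝ, 0 < |lam| → |lam| < lam₀ →
      ∀ E > (0:ℝ), |FV (xab lam E) (xa lam E) (xb lam E)| < ε := by
  have hfa' : IntervalIntegrable fa volume 0 ℓa :=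
    (intervalIntegrable_iff_integrableOn_Ioc_of_le hℓa.le).2 (hfa.integrable one_le_two)
  have hfb' : IntervalIntegrable fb volume 0 ℓb :=
    (intervalIntegrable_iff_integrableOn_Ioc_of_le hℓb.le).2 (hfb.integrable one_le_two)
  have hfab' := intervalIntegrable_concatPair hℓa.le hℓb.le hfa' hfb'
  have hK {ℓ : ℝ} (f : ℝ → ℝ) (hℓ : 0 ≤ ℓ) : 0 ≤ 4 * ℓ * ∫ t in 0..ℓ, |f t| :=
    mul_nonneg (by positivity) (intervalIntegral.integral_nonneg hℓ fun t _ => abs_nonneg _)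
  have hKab := hK (concatPair ℓa fa fb) (add_pos hℓa hℓb).le
  have hKa := hK fa hℓa.le
  have hKb := hK fb hℓb.le
  set C := (4 * (ℓa + ℓb) * ∫ t in 0..ℓa + ℓb, |concatPair ℓa fa fb t|)
    + (4 * ℓa * ∫ t in 0..ℓa, |fa t|) + 4 * ℓb * ∫ t in 0..ℓb, |fb t|
  intro ε hε
  refine ⟨min 1 (ε / 36) / (C + 1), by positivity, fun lam _ hlam E hE => ?_⟩
  have hδ : |lam| * (C + 1) < min 1 (ε / 36) := (lt_div_iff₀ (by positivity)).1 hlam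
  have hδ1 : |lam| * C ≤ 1 := by nlinarith [min_le_left 1 (ε / 36), abs_nonneg lam]
  have hδε : 36 * (|lam| * C) < ε := by nlinarith [min_le_right 1 (ε / 36), abs_nonneg lam]
  have hFV := abs_FV_le_of_near_cos hδ1
    (mul_add √E ℓa ℓb ▸ (hxab lam E).abs_sub_cos_le_of_smul (add_pos hℓa hℓb).le hE hfab'
      (by linarith) hδ1)
    ((hxa lam E).abs_sub_cos_le_of_smul hℓa.le hE hfa' (by linarith) hδ1)
    ((hxb lam E).abs_sub_cos_le_of_smul hℓb.le hE hfb' (by linarith) hδ1)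
  linarith
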